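/- Necessary condition from the shrinking-ball example: let d ≥ 2, 1 ≤ r ≤ ∞ and suppose ‖𝔄^r f‖_{L^q(ℝ^d)} ≤ C ‖f‖_{L^p(ℝ^d)} holds for all f. Testing with f = χ_{B(0, cδ)} for small δ > 0, for which 𝔄^r f(x) ≳ δ^{d-1+1/r} on the annulus {1 ≤ |x| ≤ 2}, yields the necessary condition d/p ≤ d - 1 + 1/r. -/

import Mathlib

/-!
Test the inequality with `f = 𝟙_{B(0, 3δ)}` and write `d = n + 1`. For `1 ≤ |x| ≤ 3/2` and
`t ∈ [|x|, |x| + δ]`, the set of `y ∈ 𝕊ⁿ` with `x - t y ∈ B(0, 3δ)` contains the cap of radius `δ`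
around `x / |x|`. The orthogonal projection onto the tangent hyperplane is `1`-Lipschitz and maps
this cap onto a set containing a ball of radius `δ / 2`, so the cap has `μH[n]`-measure `≳ δⁿ`.
Hence `𝔄^r f ≳ δ^{n + 1/r}` on the annulus, while `‖f‖_p ≈ δ^{d/p}`; letting `δ → 0` forces
`d/p ≤ n + 1/r`.

Since `A_t` is a Bochner integral, the argument also needs the surface measure to be finite:
caps of radius `1/2` are Lipschitz graphs over balls in the tangent hyperplane, and finitely many
of them cover the compact sphere.
-/

open MeasureTheory Set
open scoped ENNReal

noncomputable section

/-- Surface measure on the unit sphere `𝕊^{d-1} ⊂ ℝ^d`. -/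
def sphMeas (d : ℕ) : Measure (EuclideanSpace ℝ (Fin d)) :=
  (μH[(d : ℝ) - 1]).restrict (Metric.sphere 0 1)

/-- Spherical average `A_t f(x)`. -/
def Asph (d : ℕ) (t : ℝ) (f : EuclideanSpace ℝ (Fin d) → ℝ)
    (x : EuclideanSpace ℝ (Fin d)) : ℝ :=
  ∫ y, f (x - t • y) ∂sphMeas d

/-- The measure `t^{d-1} dt` on `[1,2]`. -/
def muT (d : ℕ) : Measure ℝ :=
  (volume.restrict (Set.Icc (1 : ℝ) 2)).withDensity fun t => ENNReal.ofReal (t ^ ((d : ℝ) - 1))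

/-- `𝔄^r f(x) = ‖A_t f(x)‖_{L^r([1,2], t^{d-1}dt)}`. -/
def frakAe (d : ℕ) (r : ℝ≥0∞) (f : EuclideanSpace ℝ (Fin d) → ℝ)
    (x : EuclideanSpace ℝ (Fin d)) : ℝ≥0∞ :=
  eLpNorm (fun t => Asph d t f x) r (muT d)

open Metric Module Filter Topology
open scoped RealInnerProductSpace

section Lebesgue

variable {α : Type*} [MeasurableSpace α] {μ : Measure α} {s : Set α} {c : ℝ≥0∞}

lemma mul_measure_rpow_le_eLpNorm {ε : Type*} [TopologicalSpace ε] [ESeminormedAddMonoid ε]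
    {f : α → ε} {p : ℝ≥0∞} (hs : MeasurableSet s) (hμs : μ s ≠ 0) (hp : p ≠ 0)
    (hf : ∀ x ∈ s, c ≤ ‖f x‖ₑ) : c * μ s ^ (1 / p.toReal) ≤ eLpNorm f p μ := by
  rw [← enorm_eq_self c, ← eLpNorm_indicator_const' hs hμs hp]
  refine eLpNorm_mono_enorm fun x ↦ ?_
  by_cases hx : x ∈ s
  · simpa [hx] using hf x hx
  · simp [hx]

lemma mul_measure_rpow_le_lintegral_rpow {g : α → ℝ≥0∞} (hs : MeasurableSet s)
    (hg : ∀ x ∈ s, c ≤ g x) {q : ℝ} (hq : 0 < q) :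
    c * μ s ^ (1 / q) ≤ (∫⁻ x, g x ^ q ∂μ) ^ (1 / q) := by
  have hint : c ^ q * μ s ≤ ∫⁻ x, g x ^ q ∂μ :=
    calc c ^ q * μ s = ∫⁻ _ in s, c ^ q ∂μ := (setLIntegral_const s _).symm
      _ ≤ ∫⁻ x in s, g x ^ q ∂μ :=
        setLIntegral_mono' hs fun x hx ↦ ENNReal.rpow_le_rpow (hg x hx) hq.le
      _ ≤ ∫⁻ x, g x ^ q ∂μ := setLIntegral_le_lintegral s _
  calc c * μ s ^ (1 / q) = (c ^ q * μ s) ^ (1 / q) := by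
        rw [ENNReal.mul_rpow_of_nonneg _ _ (by positivity), ← ENNReal.rpow_mul,
          mul_one_div_cancel hq.ne', ENNReal.rpow_one]
    _ ≤ _ := ENNReal.rpow_le_rpow hint (by positivity)

end Lebesgue

lemma le_of_forall_mul_ofReal_rpow_le {a b : ℝ} {A B : ℝ≥0∞} (hA : A ≠ 0) (hB : B ≠ ∞)
    {ε : ℝ} (hε : 0 < ε)
    (h : ∀ δ ∈ Ioc 0 ε, A * ENNReal.ofReal δ ^ a ≤ B * ENNReal.ofReal δ ^ b) : b ≤ a := by
  by_contra! hab
  have hle : ∀ δ ∈ Ioc 0 ε, A ≤ B * ENNReal.ofReal δ ^ (b - a) := fun δ hδ ↦ by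
    have hδ0 : ENNReal.ofReal δ ≠ 0 := by simpa using hδ.1
    have hδa : ENNReal.ofReal δ ^ a ≠ 0 :=
      (ENNReal.rpow_pos (pos_iff_ne_zero.2 hδ0) ENNReal.ofReal_ne_top).ne'
    rw [← ENNReal.mul_le_mul_iff_left hδa
        (ENNReal.rpow_ne_top_of_ne_zero hδ0 ENNReal.ofReal_ne_top), mul_assoc, ← ENNReal.rpow_add _ _ hδ0 ENNReal.ofReal_ne_top, sub_add_cancel]
    exact h δ hδ
  have hlim : Tendsto (fun δ ↦ B * ENNReal.ofReal δ ^ (b - a)) (𝓝[>] 0) (𝓝 0) := by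
    have : Tendsto (fun δ ↦ ENNReal.ofReal δ ^ (b - a)) (𝓝[>] 0)
        (𝓝 (ENNReal.ofReal 0 ^ (b - a))) :=
      ((ENNReal.continuous_rpow_const.comp ENNReal.continuous_ofReal).tendsto 0).mono_left
        nhdsWithin_le_nhds
    simpa [ENNReal.zero_rpow_of_pos (sub_pos.2 hab)] using
      ENNReal.Tendsto.const_mul this (Or.inr hB)
  exact hA (nonpos_iff_eq_zero.1 (ge_of_tendsto hlim
    (eventually_of_mem (Ioc_mem_nhdsGT hε) hle)))

lemma eLpNorm_indicator_one_closedBall {F : Type*} [NormedAddCommGroup F] [NormedSpace ℝ F]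
    [MeasurableSpace F] [BorelSpace F] [FiniteDimensional ℝ F] (μ : Measure F)
    [μ.IsAddHaarMeasure] {p : ℝ} (hp : 0 < p) {R : ℝ} (hR : 0 ≤ R) :
    eLpNorm ((closedBall (0 : F) R).indicator (1 : F → ℝ)) (ENNReal.ofReal p) μ =
      μ (ball 0 1) ^ (1 / p) * ENNReal.ofReal R ^ (finrank ℝ F / p) := by
  rw [Pi.one_def, eLpNorm_indicator_const measurableSet_closedBall (by simpa using hp)
    ENNReal.ofReal_ne_top, enorm_one, one_mul, ENNReal.toReal_ofReal hp.le,
    Measure.addHaar_closedBall μ _ hR, ENNReal.mul_rpow_of_nonneg _ _ (by positivity),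
    ENNReal.ofReal_pow hR, ← ENNReal.rpow_natCast, ← ENNReal.rpow_mul, mul_one_div, mul_comm]

lemma measure_norm_preimage_Icc_ne_zero {F : Type*} [NormedAddCommGroup F] [NormedSpace ℝ F]
    [Nontrivial F] [MeasurableSpace F] (μ : Measure F) [μ.IsOpenPosMeasure] {a b : ℝ}
    (ha : 0 ≤ a) (hab : a < b) : μ (norm ⁻¹' Icc a b) ≠ 0 := by
  obtain ⟨x, hx⟩ := exists_norm_eq F (c := (a + b) / 2) (by linarith)
  refine ne_bot_of_le_ne_bot ((isOpen_Ioo.preimage continuous_norm).measure_ne_zero μ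
    ⟨x, ?_⟩) (measure_mono (preimage_mono Ioo_subset_Icc_self))
  rw [mem_preimage, hx, mem_Ioo]
  constructor <;> linarith

lemma norm_smul_sub_smul_le {F : Type*} [NormedAddCommGroup F] [NormedSpace ℝ F] {u y : F}
    (hu : ‖u‖ = 1) (c : ℝ) {t : ℝ} (ht : 0 ≤ t) :
    ‖c • u - t • y‖ ≤ |c - t| + t * ‖u - y‖ :=
  calc ‖c • u - t • y‖ = ‖(c - t) • u + t • (u - y)‖ := by congr 1; module
    _ ≤ |c - t| + t * ‖u - y‖ := by
      refine (norm_add_le _ _).trans_eq ?_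
      rw [norm_smul, norm_smul, hu, Real.norm_eq_abs, Real.norm_of_nonneg ht, mul_one]

namespace Hemisphere

variable {F V : Type*} [NormedAddCommGroup F] [InnerProductSpace ℝ F] {u : F}

lemma norm_add_smul_sq (hu : ‖u‖ = 1) (w : (ℝ ∙ u)ᗮ) (c : ℝ) :
    ‖(w : F) + c • u‖ ^ 2 = ‖w‖ ^ 2 + c ^ 2 := by
  have hwu : ⟪(w : F), c • u⟫ = 0 := by
    rw [real_inner_smul_right, Submodule.mem_orthogonal_singleton_iff_inner_left.1 w.2, mul_zero]
  rw [sq, sq, norm_add_sq_eq_norm_sq_add_norm_sq_of_inner_eq_zero _ _ hwu, norm_smul, hu,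
    Real.norm_eq_abs, mul_one, abs_mul_abs_self, Submodule.coe_norm, sq]

variable [NormedAddCommGroup V] [NormedSpace ℝ V] (e : (ℝ ∙ u)ᗮ ≃ₗᵢ[ℝ] V)

/- For a unit vector `u`, `proj e` and `graph e` are mutually inverse between the closed hemisphere
`{y ∈ 𝕊 | 0 ≤ ⟪u, y⟫}` and the closed unit ball of `V ≅ uᗮ`. -/

def proj (y : F) : V := e ((ℝ ∙ u)ᗮ.orthogonalProjectionOnto y)

def graph (z : V) : F := (e.symm z : F) + √(1 - ‖z‖ ^ 2) • u

lemma lipschitzWith_proj : LipschitzWith 1 (proj e) := by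
  have h := e.lipschitz.comp (ℝ ∙ u)ᗮ.lipschitzWith_orthogonalProjectionOnto
  rwa [mul_one] at h

lemma proj_self : proj e u = 0 := by
  simp [proj, Submodule.orthogonalProjectionOnto_orthogonalComplement_singleton_eq_zero]

lemma proj_graph (z : V) : proj e (graph e z) = z := by
  simp [proj, graph, map_add, map_smul,
    Submodule.orthogonalProjectionOnto_orthogonalComplement_singleton_eq_zero,
    Submodule.orthogonalProjectionOnto_mem_subspace_eq_self]

lemma norm_graph (hu : ‖u‖ = 1) {z : V} (hz : ‖z‖ ≤ 1) : ‖graph e z‖ = 1 := by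
  have h := norm_add_smul_sq hu (e.symm z) √(1 - ‖z‖ ^ 2)
  rw [LinearIsometryEquiv.norm_map, Real.sq_sqrt (by nlinarith [norm_nonneg z])] at h
  refine (pow_left_inj₀ (norm_nonneg _) zero_le_one two_ne_zero).1 ?_
  rw [graph, h]
  ring

lemma norm_graph_sub_le (hu : ‖u‖ = 1) {z : V} (hz : ‖z‖ ≤ 1) :
    ‖graph e z - u‖ ≤ 2 * ‖z‖ := by
  have hs0 : 0 ≤ ‖z‖ ^ 2 := by positivity
  have hs1 : ‖z‖ ^ 2 ≤ 1 := pow_le_one₀ (norm_nonneg z) hz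
  have hsqrt : √(1 - ‖z‖ ^ 2) ≤ 1 := Real.sqrt_le_one.2 (by linarith)
  have hs : 1 - √(1 - ‖z‖ ^ 2) ≤ ‖z‖ ^ 2 := by
    have := Real.sqrt_le_sqrt (show (1 - ‖z‖ ^ 2) ^ 2 ≤ 1 - ‖z‖ ^ 2 by nlinarith)
    rw [Real.sqrt_sq (by linarith)] at this
    linarith
  have heq : graph e z - u = (e.symm z : F) + (√(1 - ‖z‖ ^ 2) - 1) • u := by
    simp only [graph, sub_smul, one_smul]; abel
  have h := norm_add_smul_sq hu (e.symm z) (√(1 - ‖z‖ ^ 2) - 1)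
  rw [LinearIsometryEquiv.norm_map, ← heq] at h
  refine (pow_le_pow_iff_left₀ (norm_nonneg _) (by positivity) two_ne_zero).1 ?_
  rw [h]
  nlinarith

lemma graph_proj (hu : ‖u‖ = 1) {y : F} (hy : ‖y‖ = 1) (hyu : 0 ≤ ⟪u, y⟫) :
    graph e (proj e y) = y := by
  have hmem : y - ⟪u, y⟫ • u ∈ (ℝ ∙ u)ᗮ := by
    rw [Submodule.mem_orthogonal_singleton_iff_inner_right, inner_sub_right, real_inner_smul_right,
      real_inner_self_eq_norm_sq, hu]; ring
  set w := (ℝ ∙ u)ᗮ.orthogonalProjectionOnto y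
  have hw : (w : F) = y - ⟪u, y⟫ • u := by
    have := (ℝ ∙ u)ᗮ.orthogonalProjectionOnto_mem_subspace_eq_self ⟨_, hmem⟩
    rw [map_sub, map_smul,
      Submodule.orthogonalProjectionOnto_orthogonalComplement_singleton_eq_zero, smul_zero,
      sub_zero] at this
    simp only [w, this]
  have hnorm := norm_add_smul_sq hu w ⟪u, y⟫
  rw [hw, sub_add_cancel, hy] at hnorm
  have hc : √(1 - ‖proj e y‖ ^ 2) = ⟪u, y⟫ := by
    rw [proj, LinearIsometryEquiv.norm_map,
      show 1 - ‖w‖ ^ 2 = ⟪u, y⟫ ^ 2 by linarith, Real.sqrt_sq hyu]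
  rw [graph, hc, proj, LinearIsometryEquiv.symm_apply_apply, hw, sub_add_cancel]

lemma contDiffOn_graph {n : ℕ} (e : (ℝ ∙ u)ᗮ ≃ₗᵢ[ℝ] EuclideanSpace ℝ (Fin n)) :
    ContDiffOn ℝ 1 (graph e) (closedBall 0 (1 / 2)) := by
  have hsub : ContDiff ℝ 1 (fun z ↦ (e.symm z : F)) :=
    ((ℝ ∙ u)ᗮ.subtypeL.comp e.symm.toContinuousLinearEquiv.toContinuousLinearMap).contDiff
  refine hsub.contDiffOn.add (ContDiffOn.smul ?_ contDiffOn_const)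
  refine ContDiffOn.sqrt (contDiff_const.sub (contDiff_norm_sq ℝ)).contDiffOn fun z hz ↦ ?_
  rw [mem_closedBall, dist_zero_right] at hz
  nlinarith [norm_nonneg z]

end Hemisphere

lemma nonempty_orthogonal_linearIsometryEquiv {F : Type*} [NormedAddCommGroup F]
    [InnerProductSpace ℝ F] {n : ℕ} (hF : finrank ℝ F = n + 1) {u : F} (hu : u ≠ 0) :
    Nonempty ((ℝ ∙ u)ᗮ ≃ₗᵢ[ℝ] EuclideanSpace ℝ (Fin n)) :=
  haveI : Fact (finrank ℝ F = n + 1) := ⟨hF⟩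
  ⟨(OrthonormalBasis.fromOrthogonalSpanSingleton n hu).repr⟩

section SphereCap

variable {F : Type*} [NormedAddCommGroup F] [InnerProductSpace ℝ F] [MeasurableSpace F]
  [BorelSpace F] {n : ℕ}

lemma ofReal_pow_mul_le_hausdorffMeasure_sphere_inter_closedBall (hF : finrank ℝ F = n + 1)
    {u : F} (hu : ‖u‖ = 1) {δ : ℝ} (hδ0 : 0 ≤ δ) (hδ1 : δ ≤ 1) :
    ENNReal.ofReal δ ^ n * μH[n] (closedBall (0 : EuclideanSpace ℝ (Fin n)) (1 / 2)) ≤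
      μH[n] (sphere (0 : F) 1 ∩ closedBall u δ) := by
  obtain ⟨e⟩ := nonempty_orthogonal_linearIsometryEquiv hF (u := u) (by rintro rfl; simp at hu)
  have hsub : closedBall (0 : EuclideanSpace ℝ (Fin n)) (δ * (1 / 2)) ⊆
      Hemisphere.proj e '' (sphere 0 1 ∩ closedBall u δ) := by
    intro z hz
    rw [mem_closedBall, dist_zero_right] at hz
    have hz1 : ‖z‖ ≤ 1 := by linarith
    refine ⟨Hemisphere.graph e z, ⟨?_, ?_⟩, Hemisphere.proj_graph e z⟩
    · rw [mem_sphere_zero_iff_norm, Hemisphere.norm_graph e hu hz1]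
    · rw [mem_closedBall, dist_eq_norm]
      linarith [Hemisphere.norm_graph_sub_le e hu hz1]
  calc ENNReal.ofReal δ ^ n * μH[n] (closedBall (0 : EuclideanSpace ℝ (Fin n)) (1 / 2))
      = μH[n] (closedBall (0 : EuclideanSpace ℝ (Fin n)) (δ * (1 / 2))) := by
        rw [Measure.addHaar_closedBall_mul _ _ hδ0 (by norm_num), finrank_euclideanSpace_fin,
          ENNReal.ofReal_pow hδ0]
    _ ≤ μH[n] (Hemisphere.proj e '' (sphere 0 1 ∩ closedBall u δ)) := measure_mono hsub
    _ ≤ μH[n] (sphere (0 : F) 1 ∩ closedBall u δ) := by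
        simpa using (Hemisphere.lipschitzWith_proj e).hausdorffMeasure_image_le
          (Nat.cast_nonneg n) (sphere (0 : F) 1 ∩ closedBall u δ)

lemma hausdorffMeasure_sphere_inter_closedBall_lt_top (hF : finrank ℝ F = n + 1) {u : F}
    (hu : ‖u‖ = 1) : μH[n] (sphere (0 : F) 1 ∩ closedBall u (1 / 2)) < ∞ := by
  obtain ⟨e⟩ := nonempty_orthogonal_linearIsometryEquiv hF (u := u) (by rintro rfl; simp at hu)
  have hsub :
      sphere (0 : F) 1 ∩ closedBall u (1 / 2) ⊆ Hemisphere.graph e '' closedBall 0 (1 / 2) := by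
    rintro y ⟨hy, hyu⟩
    rw [mem_sphere_zero_iff_norm] at hy
    rw [mem_closedBall, dist_eq_norm] at hyu
    refine ⟨Hemisphere.proj e y, ?_, Hemisphere.graph_proj e hu hy ?_⟩
    · have := (Hemisphere.lipschitzWith_proj e).dist_le_mul y u
      rw [Hemisphere.proj_self, NNReal.coe_one, one_mul, dist_zero_right, dist_eq_norm] at this
      rw [mem_closedBall, dist_zero_right]
      linarith
    · have := norm_sub_sq_real y u
      rw [hy, hu, real_inner_comm] at this
      nlinarith [norm_nonneg (y - u)]
  obtain ⟨K, hK⟩ := (Hemisphere.contDiffOn_graph e).exists_lipschitzOnWith one_ne_zero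
    (convex_closedBall _ _) (isCompact_closedBall _ _)
  calc μH[n] (sphere (0 : F) 1 ∩ closedBall u (1 / 2))
      ≤ (K : ℝ≥0∞) ^ (n : ℝ) * μH[n] (closedBall (0 : EuclideanSpace ℝ (Fin n)) (1 / 2)) :=
        (measure_mono hsub).trans (hK.hausdorffMeasure_image_le (Nat.cast_nonneg n))
    _ < ∞ := ENNReal.mul_lt_top (by simp) measure_closedBall_lt_top

lemma hausdorffMeasure_sphere_lt_top (hF : finrank ℝ F = n + 1) :
    μH[n] (sphere (0 : F) 1) < ∞ :=
  haveI : FiniteDimensional ℝ F := Module.finite_of_finrank_eq_succ hF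
  (isCompact_sphere 0 1).measure_lt_top_of_nhdsWithin fun u hu ↦
    ⟨_, inter_mem_nhdsWithin _ (closedBall_mem_nhds u (by norm_num)),
      hausdorffMeasure_sphere_inter_closedBall_lt_top hF (mem_sphere_zero_iff_norm.1 hu)⟩

end SphereCap

section SphericalAverage

local notation "E" n => EuclideanSpace ℝ (Fin n)

lemma sphMeas_succ (n : ℕ) : sphMeas (n + 1) = μH[n].restrict (sphere 0 1) := by
  simp [sphMeas]

instance (n : ℕ) : IsFiniteMeasure (sphMeas (n + 1)) :=
  ⟨by simpa [sphMeas_succ] using hausdorffMeasure_sphere_lt_top finrank_euclideanSpace_fin⟩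

lemma enorm_Asph_indicator_one {d : ℕ} [IsFiniteMeasure (sphMeas d)] {s : Set (E d)}
    (hs : MeasurableSet s) (t : ℝ) (x : E d) :
    ‖Asph d t (s.indicator 1) x‖ₑ = sphMeas d ((fun y ↦ x - t • y) ⁻¹' s) := by
  have hind : (fun y ↦ s.indicator (1 : (E d) → ℝ) (x - t • y)) =
      ((fun y ↦ x - t • y) ⁻¹' s).indicator 1 := rfl
  rw [Asph, hind, integral_indicator_one ((by fun_prop : Measurable fun y : E d ↦ x - t • y) hs),
    Real.enorm_of_nonneg measureReal_nonneg, ofReal_measureReal]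

lemma hausdorffMeasure_sphere_inter_closedBall_le_enorm_Asph {n : ℕ} {x : E (n + 1)}
    (hx : x ≠ 0) {t δ : ℝ} (ht : |‖x‖ - t| ≤ δ) (ht0 : 0 ≤ t) (ht2 : t ≤ 2) :
    μH[n] (sphere 0 1 ∩ closedBall (‖x‖⁻¹ • x) δ) ≤
      ‖Asph (n + 1) t ((closedBall 0 (3 * δ)).indicator 1) x‖ₑ := by
  rw [enorm_Asph_indicator_one measurableSet_closedBall, sphMeas_succ,
    Measure.restrict_apply
    ((by fun_prop : Measurable fun y : E (n + 1) ↦ x - t • y) measurableSet_closedBall)]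
  refine measure_mono fun y ⟨hy, hyu⟩ ↦ ⟨?_, hy⟩
  rw [mem_closedBall, dist_comm] at hyu
  have hx' : x = ‖x‖ • (‖x‖⁻¹ • x) := by rw [smul_inv_smul₀ (norm_ne_zero_iff.2 hx)]
  rw [mem_preimage, mem_closedBall, dist_zero_right, hx']
  calc ‖‖x‖ • (‖x‖⁻¹ • x) - t • y‖ ≤ |‖x‖ - t| + t * ‖‖x‖⁻¹ • x - y‖ :=
        norm_smul_sub_smul_le (norm_smul_inv_norm hx) _ ht0
    _ ≤ δ + 2 * δ := by rw [← dist_eq_norm]; gcongr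
    _ = 3 * δ := by ring

lemma volume_le_muT {d : ℕ} (hd : 1 ≤ d) {T : Set ℝ} (hT : MeasurableSet T)
    (hT12 : T ⊆ Icc 1 2) : volume T ≤ muT d T := by
  rw [muT, withDensity_apply _ hT, Measure.restrict_restrict hT, inter_eq_self_of_subset_left hT12]
  calc volume T = ∫⁻ _ in T, 1 := (setLIntegral_one T).symm
    _ ≤ _ := setLIntegral_mono' hT fun t ht ↦ by
      rw [← ENNReal.ofReal_one]
      exact ENNReal.ofReal_le_ofReal (Real.one_le_rpow (hT12 ht).1 (by simpa using hd))

lemma hausdorffMeasure_closedBall_mul_rpow_le_frakAe {n : ℕ} {r : ℝ≥0∞} (hr : r ≠ 0) {δ : ℝ}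
    (hδ0 : 0 < δ) (hδ : δ ≤ 1 / 2) {x : E (n + 1)} (hx1 : 1 ≤ ‖x‖) (hx2 : ‖x‖ ≤ 3 / 2) :
    μH[n] (closedBall (0 : E n) (1 / 2)) * ENNReal.ofReal δ ^ ((n : ℝ) + (r⁻¹).toReal) ≤
      frakAe (n + 1) r ((closedBall 0 (3 * δ)).indicator 1) x := by
  set c := μH[n] (closedBall (0 : E n) (1 / 2))
  set T := Icc ‖x‖ (‖x‖ + δ)
  have hx : x ≠ 0 := norm_pos_iff.1 (by linarith)
  have hT : ENNReal.ofReal δ ≤ muT (n + 1) T := by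
    have := volume_le_muT (d := n + 1) le_add_self measurableSet_Icc
      (Icc_subset_Icc hx1 (by linarith) : T ⊆ Icc 1 2)
    rwa [Real.volume_Icc, add_sub_cancel_left] at this
  have hAsph : ∀ t ∈ T, ENNReal.ofReal δ ^ n * c ≤
      ‖Asph (n + 1) t ((closedBall 0 (3 * δ)).indicator 1) x‖ₑ := fun t ht ↦
    (ofReal_pow_mul_le_hausdorffMeasure_sphere_inter_closedBall finrank_euclideanSpace_fin
      (norm_smul_inv_norm hx) hδ0.le (by linarith)).trans
    (hausdorffMeasure_sphere_inter_closedBall_le_enorm_Asph hx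
      (abs_le.2 ⟨by linarith [ht.2], by linarith [ht.1]⟩) (by linarith [ht.1])
      (by linarith [ht.2]))
  have hδ0' : ENNReal.ofReal δ ≠ 0 := by simpa using hδ0
  calc c * ENNReal.ofReal δ ^ ((n : ℝ) + (r⁻¹).toReal)
      = ENNReal.ofReal δ ^ n * c * ENNReal.ofReal δ ^ (1 / r.toReal) := by
        rw [ENNReal.rpow_add _ _ hδ0' ENNReal.ofReal_ne_top, ENNReal.rpow_natCast,
          ENNReal.toReal_inv, one_div]
        ring
    _ ≤ ENNReal.ofReal δ ^ n * c * muT (n + 1) T ^ (1 / r.toReal) := by gcongr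
    _ ≤ frakAe (n + 1) r ((closedBall 0 (3 * δ)).indicator 1) x :=
        mul_measure_rpow_le_eLpNorm measurableSet_Icc (ne_bot_of_le_ne_bot hδ0' hT) hr hAsph

lemma exists_mul_rpow_le_lintegral_frakAe_indicator_closedBall (n : ℕ) {r : ℝ≥0∞} (hr : r ≠ 0)
    {q : ℝ} (hq : 0 < q) : ∃ A ≠ 0, ∀ δ ∈ Ioc (0 : ℝ) (1 / 2),
      A * ENNReal.ofReal δ ^ ((n : ℝ) + (r⁻¹).toReal) ≤
        (∫⁻ x, frakAe (n + 1) r ((closedBall 0 (3 * δ)).indicator 1) x ^ q) ^ (1 / q) := by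
  set annulus : Set (E (n + 1)) := norm ⁻¹' Icc 1 (3 / 2)
  have hA : volume annulus ^ (1 / q) ≠ 0 := (ENNReal.rpow_pos_of_nonneg (pos_iff_ne_zero.2
    (measure_norm_preimage_Icc_ne_zero _ zero_le_one (by norm_num))) (by positivity)).ne'
  refine ⟨_, mul_ne_zero (measure_closedBall_pos μH[n] (0 : E n) one_half_pos).ne' hA,
    fun δ ⟨hδ0, hδ⟩ ↦ ?_⟩
  rw [mul_right_comm]
  exact mul_measure_rpow_le_lintegral_rpow (measurable_norm measurableSet_Icc)
    (fun x hx ↦ hausdorffMeasure_closedBall_mul_rpow_le_frakAe hr hδ0 hδ hx.1 hx.2) hq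

end SphericalAverage

theorem stmt14_general (d : ℕ) (hd : 2 ≤ d) (r : ℝ≥0∞) (hr : 1 ≤ r) (p q : ℝ)
    (hp : 1 ≤ p) (hq : 1 ≤ q) (C : ℝ)
    (h : ∀ f : EuclideanSpace ℝ (Fin d) → ℝ, Measurable f →
      (∫⁻ x, frakAe d r f x ^ q) ^ (1 / q) ≤
        ENNReal.ofReal C * eLpNorm f (ENNReal.ofReal p) volume) :
    (d : ℝ) / p ≤ (d : ℝ) - 1 + (r⁻¹).toReal := by
  obtain ⟨n, rfl⟩ : ∃ n, d = n + 1 := ⟨d - 1, by omega⟩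
  have hp0 : 0 < p := by linarith
  obtain ⟨A, hA, hlower⟩ := exists_mul_rpow_le_lintegral_frakAe_indicator_closedBall n
    (zero_lt_one.trans_le hr).ne' (by linarith : 0 < q)
  set B := ENNReal.ofReal C * (volume (ball (0 : EuclideanSpace ℝ (Fin (n + 1))) 1) ^ (1 / p) *
    ENNReal.ofReal 3 ^ (((n + 1 : ℕ) : ℝ) / p))
  rw [show ((n + 1 : ℕ) : ℝ) - 1 = n by push_cast; ring]
  refine le_of_forall_mul_ofReal_rpow_le hA (by finiteness : B ≠ ∞) one_half_pos
    fun δ hδ ↦ ?_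
  calc A * ENNReal.ofReal δ ^ ((n : ℝ) + (r⁻¹).toReal)
      ≤ (∫⁻ x, frakAe (n + 1) r ((closedBall 0 (3 * δ)).indicator 1) x ^ q) ^ (1 / q) :=
        hlower δ hδ
    _ ≤ _ := h _ (measurable_one.indicator measurableSet_closedBall)
    _ = B * ENNReal.ofReal δ ^ (((n + 1 : ℕ) : ℝ) / p) := by
        rw [eLpNorm_indicator_one_closedBall volume hp0 (by linarith [hδ.1]),
          finrank_euclideanSpace_fin, ENNReal.ofReal_mul zero_le_three,
          ENNReal.mul_rpow_of_nonneg _ _ (by positivity)]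
        ring

/-- necessary condition from the shrinking-ball example: if
`‖𝔄^r f‖_{L^q} ≤ C ‖f‖_{L^p}` for all `f`, then `d/p ≤ d - 1 + 1/r`. -/
theorem stmt14 (d : ℕ) (hd : 2 ≤ d) (r : ℝ≥0∞) (hr : 1 ≤ r) (p q : ℝ)
    (hp : 1 ≤ p) (hq : 1 ≤ q) (C : ℝ) (hC : 0 < C)
    (h : ∀ f : EuclideanSpace ℝ (Fin d) → ℝ, Measurable f →
      (∫⁻ x, frakAe d r f x ^ q) ^ (1 / q) ≤
        ENNReal.ofReal C * eLpNorm f (ENNReal.ofReal p) volume) :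
    (d : ℝ) / p ≤ (d : ℝ) - 1 + (r⁻¹).toReal :=
  stmt14_general d hd r hr p q hp hq C h
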